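/- For all r ≥ 0 one has ψ(r) ≤ exp(∫₀^η (κ⁺(v) + c v) dv) · ψ₁(r), where ψ₁(r) = ∫₀^r e^{c s²/2} (∫_s^∞ e^{-(c-ε) u²/2} du) ds. -/

import Mathlib

open MeasureTheory Real

/-- `κ*(r) = κ⁺(r)` for `r ≤ η`, and `κ*(r) = -c r` for `r > η`. -/
noncomputable def kappaStar (c η : ℝ) (κ : ℝ → ℝ) (r : ℝ) : ℝ :=
  if r ≤ η then max (κ r) 0 else -c * r

/-- `ψ'(r) = exp(-∫₀^r κ*(v) dv) ∫_r^∞ exp(∫₀^u (κ*(v) + ε v) dv) du`. -/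
noncomputable def psiDeriv (c ε η : ℝ) (κ : ℝ → ℝ) (r : ℝ) : ℝ :=
  Real.exp (-∫ v in (0:ℝ)..r, kappaStar c η κ v) *
    ∫ u in Set.Ioi r, Real.exp (∫ v in (0:ℝ)..u, (kappaStar c η κ v + ε * v))

/-- The auxiliary function `ψ` of Section 2.2. -/
noncomputable def psi (c ε η : ℝ) (κ : ℝ → ℝ) (r : ℝ) : ℝ :=
  ∫ s in (0:ℝ)..r, psiDeriv c ε η κ s

/-- `ψ₁ c ε r = ∫₀^r e^{c s²/2} (∫_s^∞ e^{-(c-ε) u²/2} du) ds`. -/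
noncomputable def psi1 (c ε r : ℝ) : ℝ :=
  ∫ s in (0:ℝ)..r, Real.exp (c * s ^ 2 / 2) * ∫ u in Set.Ioi s, Real.exp (-(c - ε) * u ^ 2 / 2)

/-! Put `G u = ∫₀^u (κ* v + c v) dv`. The integrand is nonnegative on `[0, ∞)` and vanishes
beyond `η`, so `0 ≤ G u ≤ G η`. As `∫₀^s κ* = G s - c s²/2` and
`∫₀^u (κ* v + ε v) dv = G u - (c - ε) u²/2`, the integrand of `ψ` is bounded pointwise by
`exp (G η)` times that of `ψ₁`, and `G η` is the constant of the theorem.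

If `κ⁺` is not integrable on `(0, η]`, then (by continuity of `κ` away from `0`) neither is `κ*`
on any `(0, u]`; the inner interval integrals then take the junk value `0`, the tail integral of the
constant `1` over `Ioi s` is junk as well, and `ψ = 0`. -/

open Set

theorem intervalIntegral.integral_mono_of_nonneg {f g : ℝ → ℝ} {a b : ℝ} (hab : a ≤ b)
    (hf : ∀ x ∈ Ioc a b, 0 ≤ f x) (hg : IntervalIntegrable g volume a b)
    (h : ∀ x ∈ Ioc a b, f x ≤ g x) :
    ∫ x in a..b, f x ≤ ∫ x in a..b, g x := by
  rw [intervalIntegral.integral_of_le hab, intervalIntegral.integral_of_le hab]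
  exact MeasureTheory.integral_mono_of_nonneg
    ((ae_restrict_iff' measurableSet_Ioc).mpr (ae_of_all _ hf)) hg.1
    ((ae_restrict_iff' measurableSet_Ioc).mpr (ae_of_all _ h))

theorem antitone_setIntegral_Ioi {f : ℝ → ℝ} (hf : ∀ x, 0 ≤ f x) (hfi : Integrable f) :
    Antitone fun s => ∫ u in Ioi s, f u :=
  fun _ _ hst => setIntegral_mono_set hfi.integrableOn (ae_of_all _ fun x => hf x)
    (Ioi_subset_Ioi hst).eventuallyLE

theorem integrable_exp_neg_mul_sq_div_two {b : ℝ} (hb : 0 < b) :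
    Integrable fun u : ℝ => exp (-b * u ^ 2 / 2) := by
  convert integrable_exp_neg_mul_sq (half_pos hb) using 3
  ring

section kappaStar

variable {c η : ℝ} {κ : ℝ → ℝ}

theorem kappaStar_of_le {v : ℝ} (hv : v ≤ η) : kappaStar c η κ v = max (κ v) 0 :=
  if_pos hv

theorem kappaStar_of_lt {v : ℝ} (hv : η < v) : kappaStar c η κ v = -c * v :=
  if_neg hv.not_ge

theorem kappaStar_add_mul_nonneg (hc : 0 ≤ c) {v : ℝ} (hv : 0 ≤ v) :
    0 ≤ kappaStar c η κ v + c * v := by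
  rcases le_or_gt v η with hvη | hvη
  · rw [kappaStar_of_le hvη]
    exact add_nonneg (le_max_right _ _) (mul_nonneg hc hv)
  · rw [kappaStar_of_lt hvη, neg_mul, neg_add_cancel]

theorem integrableOn_kappaStar (hInt : IntegrableOn (fun v => max (κ v) 0) (Ioc 0 η)) (b : ℝ) :
    IntegrableOn (kappaStar c η κ) (Ioc 0 b) := by
  have hleft : IntegrableOn (kappaStar c η κ) (Ioc 0 η) :=
    hInt.congr_fun (fun v hv => (kappaStar_of_le hv.2).symm) measurableSet_Ioc
  have hright : IntegrableOn (kappaStar c η κ) (Ioc η b) :=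
    (continuous_const.mul continuous_id).integrableOn_Ioc.congr_fun
      (fun v hv => (kappaStar_of_lt hv.1).symm) measurableSet_Ioc
  exact (hleft.union hright).mono_set Ioc_subset_Ioc_union_Ioc

theorem intervalIntegrable_kappaStar_add_mul
    (hInt : IntegrableOn (fun v => max (κ v) 0) (Ioc 0 η)) (a : ℝ) {b : ℝ} (hb : 0 ≤ b) :
    IntervalIntegrable (fun v => kappaStar c η κ v + a * v) volume 0 b :=
  ((intervalIntegrable_iff_integrableOn_Ioc_of_le hb).mpr (integrableOn_kappaStar hInt b)).add
    ((continuous_const.mul continuous_id).intervalIntegrable 0 b)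

theorem integral_kappaStar_add_mul_eq
    (hInt : IntegrableOn (fun v => max (κ v) 0) (Ioc 0 η)) (a : ℝ) {s : ℝ} (hs : 0 ≤ s) :
    ∫ v in (0:ℝ)..s, (kappaStar c η κ v + a * v) =
      (∫ v in (0:ℝ)..s, (kappaStar c η κ v + c * v)) - (c - a) * s ^ 2 / 2 := by
  have hsplit : ∀ v, kappaStar c η κ v + a * v = (kappaStar c η κ v + c * v) - (c - a) * v :=
    fun v => by ring
  simp_rw [hsplit]
  rw [intervalIntegral.integral_sub (intervalIntegrable_kappaStar_add_mul hInt c hs)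
    ((continuous_const_mul (c - a)).intervalIntegrable 0 s),
    intervalIntegral.integral_const_mul, integral_id]
  ring

theorem integral_kappaStar_add_mul_nonneg (hc : 0 ≤ c) {u : ℝ} (hu : 0 ≤ u) :
    0 ≤ ∫ v in (0:ℝ)..u, (kappaStar c η κ v + c * v) :=
  intervalIntegral.integral_nonneg hu fun _ hv => kappaStar_add_mul_nonneg hc hv.1

theorem integral_kappaStar_add_mul_le (hc : 0 ≤ c) (hη : 0 ≤ η)
    (hInt : IntegrableOn (fun v => max (κ v) 0) (Ioc 0 η)) {u : ℝ} (hu : 0 ≤ u) :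
    ∫ v in (0:ℝ)..u, (kappaStar c η κ v + c * v) ≤
      ∫ v in (0:ℝ)..η, (kappaStar c η κ v + c * v) := by
  rcases le_or_gt u η with huη | hηu
  · exact intervalIntegral.integral_mono_interval le_rfl hu huη
      ((ae_restrict_iff' measurableSet_Ioc).mpr (ae_of_all _ fun _ hv =>
        kappaStar_add_mul_nonneg hc hv.1.le))
      (intervalIntegrable_kappaStar_add_mul hInt c hη)
  · have htail : ∫ v in η..u, (kappaStar c η κ v + c * v) = 0 := by
      rw [intervalIntegral.integral_of_le hηu.le]
      refine setIntegral_eq_zero_of_forall_eq_zero fun v hv => ?_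
      rw [kappaStar_of_lt hv.1]
      ring
    rw [← intervalIntegral.integral_add_adjacent_intervals
      (intervalIntegrable_kappaStar_add_mul hInt c hη)
      ((intervalIntegrable_kappaStar_add_mul hInt c hu).mono_set (by
        rw [uIcc_of_le hηu.le, uIcc_of_le hu]; exact Icc_subset_Icc hη le_rfl)), htail, add_zero]

theorem exp_integral_kappaStar_add_mul_le (hc : 0 ≤ c) (hη : 0 ≤ η)
    (hInt : IntegrableOn (fun v => max (κ v) 0) (Ioc 0 η)) (ε : ℝ) {u : ℝ} (hu : 0 ≤ u) :
    exp (∫ v in (0:ℝ)..u, (kappaStar c η κ v + ε * v)) ≤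
      exp (∫ v in (0:ℝ)..η, (kappaStar c η κ v + c * v)) * exp (-(c - ε) * u ^ 2 / 2) := by
  rw [integral_kappaStar_add_mul_eq hInt ε hu, ← exp_add]
  have := integral_kappaStar_add_mul_le hc hη hInt hu
  exact exp_le_exp.mpr (by linarith)

theorem exp_neg_integral_kappaStar_le (hc : 0 ≤ c)
    (hInt : IntegrableOn (fun v => max (κ v) 0) (Ioc 0 η)) {s : ℝ} (hs : 0 ≤ s) :
    exp (-∫ v in (0:ℝ)..s, kappaStar c η κ v) ≤ exp (c * s ^ 2 / 2) := by
  have h := integral_kappaStar_add_mul_eq (c := c) hInt 0 hs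
  simp only [zero_mul, add_zero, sub_zero] at h
  have := integral_kappaStar_add_mul_nonneg (η := η) (κ := κ) hc hs
  exact exp_le_exp.mpr (by linarith)

theorem integrableOn_max_zero_of_integrableOn_kappaStar (hκcont : ContinuousOn κ (Ioi 0))
    {u : ℝ} (hu : 0 < u) (h : IntegrableOn (kappaStar c η κ) (Ioc 0 u)) :
    IntegrableOn (fun v => max (κ v) 0) (Ioc 0 η) := by
  rcases le_or_gt η 0 with hη | hη
  · simp [Ioc_eq_empty hη.not_gt]
  have hm : 0 < min u η := lt_min hu hη
  have hnear : IntegrableOn (fun v => max (κ v) 0) (Ioc 0 (min u η)) :=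
    (h.mono_set (Ioc_subset_Ioc_right (min_le_left _ _))).congr_fun
      (fun v hv => kappaStar_of_le (hv.2.trans (min_le_right _ _))) measurableSet_Ioc
  have hfar : IntegrableOn (fun v => max (κ v) 0) (Icc (min u η) η) :=
    ContinuousOn.integrableOn_Icc <|
      ContinuousOn.sup (hκcont.mono fun v (hv : v ∈ Icc (min u η) η) => hm.trans_le hv.1)
        continuousOn_const
  exact (hnear.union (hfar.mono_set Ioc_subset_Icc_self)).mono_set Ioc_subset_Ioc_union_Ioc

end kappaStar

section psi

variable {c ε η : ℝ} {κ : ℝ → ℝ}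

theorem psiDeriv_nonneg (s : ℝ) : 0 ≤ psiDeriv c ε η κ s :=
  mul_nonneg (exp_pos _).le (integral_nonneg fun _ => (exp_pos _).le)

theorem psiDeriv_le (hc : 0 ≤ c) (hεc : ε < c) (hη : 0 ≤ η)
    (hInt : IntegrableOn (fun v => max (κ v) 0) (Ioc 0 η)) {s : ℝ} (hs : 0 ≤ s) :
    psiDeriv c ε η κ s ≤ exp (∫ v in (0:ℝ)..η, (kappaStar c η κ v + c * v)) *
      (exp (c * s ^ 2 / 2) * ∫ u in Ioi s, exp (-(c - ε) * u ^ 2 / 2)) := by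
  set A := ∫ v in (0:ℝ)..η, (kappaStar c η κ v + c * v)
  have htail : ∫ u in Ioi s, exp (∫ v in (0:ℝ)..u, (kappaStar c η κ v + ε * v)) ≤
      exp A * ∫ u in Ioi s, exp (-(c - ε) * u ^ 2 / 2) := by
    rw [← integral_const_mul]
    exact integral_mono_of_nonneg (ae_of_all _ fun _ => (exp_pos _).le)
      ((integrable_exp_neg_mul_sq_div_two (sub_pos.2 hεc)).const_mul _).integrableOn
      ((ae_restrict_iff' measurableSet_Ioi).mpr (ae_of_all _ fun u hu =>
        exp_integral_kappaStar_add_mul_le hc hη hInt ε (hs.trans (le_of_lt hu))))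
  calc psiDeriv c ε η κ s
      ≤ exp (c * s ^ 2 / 2) * (exp A * ∫ u in Ioi s, exp (-(c - ε) * u ^ 2 / 2)) :=
        mul_le_mul (exp_neg_integral_kappaStar_le hc hInt hs) htail
          (integral_nonneg fun _ => (exp_pos _).le) (exp_pos _).le
    _ = exp A * (exp (c * s ^ 2 / 2) * ∫ u in Ioi s, exp (-(c - ε) * u ^ 2 / 2)) := by ring

theorem psiDeriv_eq_zero_of_not_integrableOn (hκcont : ContinuousOn κ (Ioi 0))
    (hInt : ¬ IntegrableOn (fun v => max (κ v) 0) (Ioc 0 η)) {s : ℝ} (hs : 0 ≤ s) :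
    psiDeriv c ε η κ s = 0 := by
  have hundef : ∀ u ∈ Ioi s, exp (∫ v in (0:ℝ)..u, (kappaStar c η κ v + ε * v)) = 1 := by
    intro u hu
    have hu0 : 0 < u := hs.trans_lt hu
    rw [intervalIntegral.integral_undef, exp_zero]
    rw [intervalIntegrable_iff_integrableOn_Ioc_of_le hu0.le]
    intro hint
    refine hInt (integrableOn_max_zero_of_integrableOn_kappaStar (c := c) hκcont hu0 ?_)
    exact (integrable_add_iff_integrable_left' (continuous_const_mul ε).integrableOn_Ioc).mp hint
  rw [psiDeriv, setIntegral_congr_fun measurableSet_Ioi hundef, setIntegral_const]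
  simp [Measure.real, volume_Ioi]

theorem intervalIntegrable_psi1_integrand (hεc : ε < c) (r : ℝ) :
    IntervalIntegrable (fun s => exp (c * s ^ 2 / 2) * ∫ u in Ioi s, exp (-(c - ε) * u ^ 2 / 2))
      volume 0 r :=
  (antitone_setIntegral_Ioi (fun _ => (exp_pos _).le)
    (integrable_exp_neg_mul_sq_div_two (sub_pos.2 hεc))).intervalIntegrable.continuousOn_mul
    (by fun_prop)

theorem psi1_nonneg {r : ℝ} (hr : 0 ≤ r) : 0 ≤ psi1 c ε r :=
  intervalIntegral.integral_nonneg hr fun _ _ =>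
    mul_nonneg (exp_pos _).le (integral_nonneg fun _ => (exp_pos _).le)

theorem psi_le_of_integrableOn (hc : 0 ≤ c) (hεc : ε < c) (hη : 0 ≤ η)
    (hInt : IntegrableOn (fun v => max (κ v) 0) (Ioc 0 η)) {r : ℝ} (hr : 0 ≤ r) :
    psi c ε η κ r ≤
      exp (∫ v in (0:ℝ)..η, (kappaStar c η κ v + c * v)) * psi1 c ε r := by
  rw [psi, psi1, ← intervalIntegral.integral_const_mul]
  exact intervalIntegral.integral_mono_of_nonneg hr (fun s _ => psiDeriv_nonneg s)
    ((intervalIntegrable_psi1_integrand hεc r).const_mul _)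
    (fun s hs => psiDeriv_le hc hεc hη hInt hs.1.le)

theorem psi_eq_zero_of_not_integrableOn (hκcont : ContinuousOn κ (Ioi 0))
    (hInt : ¬ IntegrableOn (fun v => max (κ v) 0) (Ioc 0 η)) {r : ℝ} (hr : 0 ≤ r) :
    psi c ε η κ r = 0 := by
  rw [psi, intervalIntegral.integral_congr (g := fun _ => 0) fun s hs =>
    psiDeriv_eq_zero_of_not_integrableOn hκcont hInt (uIcc_of_le hr ▸ hs).1]
  simp

end psi

theorem stmt_11_general (c ε η : ℝ) (hc : 0 < c) (hεc : ε < c) (hη : 0 ≤ η)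
    (κ : ℝ → ℝ) (hκcont : ContinuousOn κ (Set.Ioi 0)) :
    ∀ r : ℝ, 0 ≤ r →
      psi c ε η κ r ≤ Real.exp (∫ v in (0:ℝ)..η, (max (κ v) 0 + c * v)) * psi1 c ε r := by
  intro r hr
  by_cases hInt : IntegrableOn (fun v => max (κ v) 0) (Ioc 0 η)
  · have hA : ∫ v in (0:ℝ)..η, (max (κ v) 0 + c * v) =
        ∫ v in (0:ℝ)..η, (kappaStar c η κ v + c * v) :=
      intervalIntegral.integral_congr fun v hv => by
        rw [kappaStar_of_le (uIcc_of_le hη ▸ hv).2]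
    rw [hA]
    exact psi_le_of_integrableOn hc.le hεc hη hInt hr
  · rw [psi_eq_zero_of_not_integrableOn hκcont hInt hr]
    exact mul_nonneg (exp_pos _).le (psi1_nonneg hr)

theorem stmt_11 (c ε η : ℝ) (hc : 0 < c) (hε : 0 < ε) (hεc : ε < c) (hη : 0 ≤ η)
    (κ : ℝ → ℝ) (hκcont : ContinuousOn κ (Set.Ioi 0))
    (hκ : ∀ r : ℝ, η ≤ r → κ r ≤ -c * r) :
    ∀ r : ℝ, 0 ≤ r →
      psi c ε η κ r ≤ Real.exp (∫ v in (0:ℝ)..η, (max (κ v) 0 + c * v)) * psi1 c ε r :=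
  stmt_11_general c ε η hc hεc hη κ hκcont
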